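/- Let M = (W, ≤, N, V) be an intuitionistic neighbourhood model. Then M^{coh} is a coherent intuitionistic neighbourhood model, and for all L-formulas φ and all (w,n) ∈ W^{coh}: M^{coh},(w,n) ⊩ φ if and only if M,w ⊩ φ. -/
import Mathlib


/-
Common formalisation of the syntax and semantics of the intuitionistic
monotone modal logic IM, its generalised Hilbert calculi, intuitionistic
neighbourhood models, IFOM-structures, and related constructions.
-/

namespace IMPaper

/-- Formulas of the monotone modal language L. -/
inductive Formula : Type
  | prop : ℕ → Formula
  | bot  : Formula
  | and  : Formula → Formula → Formula
  | or   : Formula → Formula → Formula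
  | imp  : Formula → Formula → Formula
  | box  : Formula → Formula
  | dia  : Formula → Formula
deriving DecidableEq

/-- Negation: ¬φ abbreviates φ → ⊥. -/
def Formula.neg (φ : Formula) : Formula := φ.imp .bot

/-- Top: ⊤ abbreviates ⊥ → ⊥. -/
def Formula.top : Formula := Formula.bot.imp .bot

/-- Substitution of formulas for proposition letters. -/
def Formula.subst (σ : ℕ → Formula) : Formula → Formula
  | .prop i   => σ i
  | .bot      => .bot
  | .and φ ψ  => .and (φ.subst σ) (ψ.subst σ)
  | .or φ ψ   => .or (φ.subst σ) (ψ.subst σ)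
  | .imp φ ψ  => .imp (φ.subst σ) (ψ.subst σ)
  | .box φ    => .box (φ.subst σ)
  | .dia φ    => .dia (φ.subst σ)

private def pp0 : Formula := .prop 0
private def pp1 : Formula := .prop 1
private def pp2 : Formula := .prop 2

/-- A standard axiomatisation of intuitionistic propositional logic. -/
def IpcAx : Set Formula :=
  { Formula.imp pp0 (.imp pp1 pp0),
    Formula.imp (.imp pp0 (.imp pp1 pp2)) (.imp (.imp pp0 pp1) (.imp pp0 pp2)),
    Formula.imp (.and pp0 pp1) pp0,
    Formula.imp (.and pp0 pp1) pp1,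
    Formula.imp pp0 (.imp pp1 (.and pp0 pp1)),
    Formula.imp pp0 (.or pp0 pp1),
    Formula.imp pp1 (.or pp0 pp1),
    Formula.imp (.imp pp0 pp2) (.imp (.imp pp1 pp2) (.imp (.or pp0 pp1) pp2)),
    Formula.imp .bot pp0 }

/-- All substitution instances of a set of formulas. -/
def Instances (Ax : Set Formula) : Set Formula :=
  {φ | ∃ ψ ∈ Ax, ∃ σ, φ = ψ.subst σ}

/-- 𝒜x: all substitution instances of Ax together with all substitution
instances of the axioms of intuitionistic propositional logic. -/
def ScrAx (Ax : Set Formula) : Set Formula := Instances Ax ∪ Instances IpcAx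

/-- The generalised Hilbert calculus GHC(Ax). -/
inductive GHC (Ax : Set Formula) : Set Formula → Formula → Prop
  | el {Γ : Set Formula} {φ : Formula} : φ ∈ Γ → GHC Ax Γ φ
  | ax {Γ : Set Formula} {φ : Formula} : φ ∈ ScrAx Ax → GHC Ax Γ φ
  | mp {Γ : Set Formula} {φ ψ : Formula} :
      GHC Ax Γ φ → GHC Ax Γ (φ.imp ψ) → GHC Ax Γ ψ
  | monBox {Γ : Set Formula} {φ ψ : Formula} :
      GHC Ax ∅ (φ.imp ψ) → GHC Ax Γ ((Formula.box φ).imp (Formula.box ψ))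
  | monDia {Γ : Set Formula} {φ ψ : Formula} :
      GHC Ax ∅ (φ.imp ψ) → GHC Ax Γ ((Formula.dia φ).imp (Formula.dia ψ))

/-- The axioms (neg_a) and (I_◇) of the calculus IMCalc. -/
def IMAx : Set Formula :=
  { Formula.imp ((Formula.box pp0).and (Formula.dia pp0.neg)) .bot,
    Formula.imp ((Formula.box Formula.top).imp (Formula.dia pp0)) (Formula.dia pp0) }

/-- Derivability in the calculus IMCalc = GHC({(□p ∧ ◇¬p) → ⊥, (□⊤ → ◇p) → ◇p}). -/
def IMC : Set Formula → Formula → Prop := GHC IMAx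

/-- An intuitionistic neighbourhood: a partial function W ⇀ 𝒫(W), encoded as a
domain together with a (total) value function whose values matter on the domain. -/
structure Nbhd (W : Type) where
  dom : Set W
  val : W → Set W

/-- The data of an intuitionistic neighbourhood model. -/
structure INStruct (W : Type) where
  le : W → W → Prop
  N : Set (Nbhd W)
  V : ℕ → Set W

variable {W W' : Type}

/-- A set is upward closed w.r.t. the order of the structure. -/
def INStruct.Up (M : INStruct W) (s : Set W) : Prop :=
  ∀ ⦃w v : W⦄, M.le w v → w ∈ s → v ∈ s

/-- `M` is an intuitionistic neighbourhood model: the order is a partial order,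
the domain of every neighbourhood is upward closed, and the valuation assigns
upward closed sets to proposition letters. -/
def INStruct.IsModel (M : INStruct W) : Prop :=
  IsPartialOrder W M.le ∧ (∀ a ∈ M.N, M.Up a.dom) ∧ ∀ i, M.Up (M.V i)

/-- Truth of a formula at a world of an intuitionistic neighbourhood model. -/
def INStruct.sat (M : INStruct W) : Formula → W → Prop
  | .prop i, w  => w ∈ M.V i
  | .bot, _     => False
  | .and φ ψ, w => M.sat φ w ∧ M.sat ψ w
  | .or φ ψ, w  => M.sat φ w ∨ M.sat ψ w
  | .imp φ ψ, w => ∀ v, M.le w v → M.sat φ v → M.sat ψ v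
  | .box φ, w   => ∃ a ∈ M.N, w ∈ a.dom ∧
      ∀ w', M.le w w' → ∀ v ∈ a.val w', M.sat φ v
  | .dia φ, w   => ∀ w', M.le w w' → ∀ a ∈ M.N, w' ∈ a.dom →
      ∃ v ∈ a.val w', M.sat φ v

/-- Semantic consequence over the class of all intuitionistic neighbourhood models. -/
def INConseq (Γ : Set Formula) (φ : Formula) : Prop :=
  ∀ (W : Type) (M : INStruct W), M.IsModel →
    ∀ w : W, (∀ ψ ∈ Γ, M.sat ψ w) → M.sat φ w

/-- A coherent intuitionistic neighbourhood: conditions (N1) and (N2). -/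
def INStruct.CoherentNbhd (M : INStruct W) (a : Nbhd W) : Prop :=
  (∀ ⦃w w' : W⦄, M.le w w' → w ∈ a.dom → ∀ v ∈ a.val w, ∃ v' ∈ a.val w', M.le v v') ∧
  (∀ ⦃w : W⦄, w ∈ a.dom → ∀ v ∈ a.val w, ∀ v', M.le v v' →
      ∃ w', M.le w w' ∧ v' ∈ a.val w')

/-- A model is coherent if all its intuitionistic neighbourhoods are coherent. -/
def INStruct.Coherent (M : INStruct W) : Prop := ∀ a ∈ M.N, M.CoherentNbhd a

/-- Semantic consequence over the class of coherent intuitionistic neighbourhood models. -/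
def CohConseq (Γ : Set Formula) (φ : Formula) : Prop :=
  ∀ (W : Type) (M : INStruct W), M.IsModel → M.Coherent →
    ∀ w : W, (∀ ψ ∈ Γ, M.sat ψ w) → M.sat φ w

/-- The relation R: w R v iff v ∈ a(w) for some neighbourhood a of w. -/
def INStruct.R (M : INStruct W) (w v : W) : Prop :=
  ∃ a ∈ M.N, w ∈ a.dom ∧ v ∈ a.val w

/-- R~-Cartesian: w ≤~ v R~ w implies w = v (with ~ the equivalence closures). -/
def INStruct.RCartesian (M : INStruct W) : Prop :=
  ∀ w v, Relation.EqvGen M.le w v → Relation.EqvGen M.R v w → w = v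

/-- N-Cartesian: w R~ v and w, v ∈ dom(a) imply a(w) = a(v). -/
def INStruct.NCartesian (M : INStruct W) : Prop :=
  ∀ a ∈ M.N, ∀ w v, Relation.EqvGen M.R w v → w ∈ a.dom → v ∈ a.dom →
    a.val w = a.val v

/-- Cartesian: both R~-Cartesian and N-Cartesian. -/
def INStruct.Cartesian (M : INStruct W) : Prop := M.RCartesian ∧ M.NCartesian

/-- Isomorphism of intuitionistic neighbourhood structures. -/
def Isomorphic (M : INStruct W) (M' : INStruct W') : Prop :=
  ∃ (α : W → W') (ν : Nbhd W → Nbhd W'),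
    Function.Bijective α ∧ Set.BijOn ν M.N M'.N ∧
    (∀ w v, M.le w v ↔ M'.le (α w) (α v)) ∧
    (∀ a ∈ M.N, ∀ w, w ∈ a.dom ↔ α w ∈ (ν a).dom) ∧
    (∀ a ∈ M.N, ∀ u ∈ a.dom, ∀ w, w ∈ a.val u ↔ α w ∈ (ν a).val (α u)) ∧
    (∀ i w, w ∈ M.V i ↔ α w ∈ M'.V i)

end IMPaper
namespace IMPaper

variable {W : Type}

/-- A world is maximal if it has no world strictly above it. -/
def INStruct.Maximal (M : INStruct W) (w : W) : Prop := ∀ v, M.le w v → v = w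

/-- The carrier W^coh: non-maximal worlds keep index 0; maximal worlds are
unravelled into a chain of copies indexed by ℕ. -/
def INStruct.CohW (M : INStruct W) : Type :=
  {p : W × ℕ // ¬ M.Maximal p.1 → p.2 = 0}

/-- The pointwise order on W^coh. -/
def INStruct.cohLe (M : INStruct W) (p q : M.CohW) : Prop :=
  M.le p.1.1 q.1.1 ∧ p.1.2 ≤ q.1.2

/-- a(w)^coh: the lift of a subset of W to W^coh. -/
def INStruct.cohSet (M : INStruct W) (s : Set W) : Set M.CohW := {p | p.1.1 ∈ s}

/-- The intuitionistic neighbourhood a_{v,m} on W^coh: its domain is the upset of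
(v,m); its value at (v,m) is a(v)^coh, and at any strictly later point it is the
upward closure of ⋃ {a(u)^coh : v ≤ u, u ∈ dom a}. -/
def INStruct.cohNbhd (M : INStruct W) (a : Nbhd W) (vm : M.CohW) : Nbhd M.CohW where
  dom := {p | M.cohLe vm p}
  val := fun p => {q |
    (p = vm ∧ q ∈ M.cohSet (a.val vm.1.1)) ∨
    (p ≠ vm ∧ ∃ q', (∃ u, M.le vm.1.1 u ∧ u ∈ a.dom ∧ q' ∈ M.cohSet (a.val u)) ∧
        M.cohLe q' q)}

/-- The coherent model M^coh induced by an intuitionistic neighbourhood model M. -/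
def INStruct.coh (M : INStruct W) : INStruct M.CohW where
  le := M.cohLe
  N := {b | ∃ a ∈ M.N, ∃ vm : M.CohW, vm.1.1 ∈ a.dom ∧ b = M.cohNbhd a vm}
  V := fun i => {p | p.1.1 ∈ M.V i}

end IMPaper
namespace IMPaper


section Aux

variable {W : Type} {M : INStruct W}

/-- Persistence of truth along the order. -/
lemma sat_persist (hM : M.IsModel) (φ : Formula) :
    ∀ {w w' : W}, M.le w w' → M.sat φ w → M.sat φ w' := by
  induction φ with
  | prop i => intro w w' h hw; exact hM.2.2 i h hw
  | bot => intro _ _ _ h; exact h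
  | and φ ψ ih1 ih2 => intro w w' h hw; exact ⟨ih1 h hw.1, ih2 h hw.2⟩
  | or φ ψ ih1 ih2 =>
      intro w w' h hw
      exact hw.elim (fun x => .inl (ih1 h x)) (fun x => .inr (ih2 h x))
  | imp φ ψ ih1 ih2 =>
      intro w w' h hw v hv hφ
      exact hw v (hM.1.trans _ _ _ h hv) hφ
  | box φ ih =>
      intro w w' h hw
      obtain ⟨a, ha, hd, hv⟩ := hw
      exact ⟨a, ha, hM.2.1 a ha h hd,
        fun u hu v hv' => hv u (hM.1.trans _ _ _ h hu) v hv'⟩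
  | dia φ ih =>
      intro w w' h hw u hu
      exact hw u (hM.1.trans _ _ _ h hu)

lemma cohLe_refl (hM : M.IsModel) (p : M.CohW) : M.cohLe p p :=
  ⟨hM.1.refl _, le_refl _⟩

lemma cohLe_trans (hM : M.IsModel) {p q r : M.CohW}
    (h1 : M.cohLe p q) (h2 : M.cohLe q r) : M.cohLe p r :=
  ⟨hM.1.trans _ _ _ h1.1 h2.1, h1.2.trans h2.2⟩

lemma cohLe_antisymm (hM : M.IsModel) {p q : M.CohW}
    (h1 : M.cohLe p q) (h2 : M.cohLe q p) : p = q :=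
  Subtype.ext (Prod.ext (hM.1.antisymm _ _ h1.1 h2.1) (Nat.le_antisymm h1.2 h2.2))

/-- Lift a world above `p.1.1` to a point of `CohW` above `p`. -/
lemma coh_lift (hM : M.IsModel) (p : M.CohW) {v : W} (h : M.le p.1.1 v) :
    ∃ q : M.CohW, q.1.1 = v ∧ M.cohLe p q := by
  by_cases hmax : M.Maximal v
  · exact ⟨⟨(v, p.1.2), fun h' => absurd hmax h'⟩, rfl, h, le_refl _⟩
  · have hnm : ¬ M.Maximal p.1.1 := by
      intro hmw
      have hvw : v = p.1.1 := hmw v h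
      exact hmax (by rw [hvw]; exact hmw)
    have h0 := p.2 hnm
    exact ⟨⟨(v, 0), fun _ => rfl⟩, rfl, h, by omega⟩

/-- Every point of `CohW` has a point above it different from any given point it
dominates... actually: a strictly larger point exists. -/
lemma coh_succ (hM : M.IsModel) (p : M.CohW) :
    ∃ q : M.CohW, M.cohLe p q ∧ q ≠ p := by
  by_cases hmax : M.Maximal p.1.1
  · refine ⟨⟨(p.1.1, p.1.2 + 1), fun h => absurd hmax h⟩, ⟨hM.1.refl _, Nat.le_succ _⟩, ?_⟩
    intro he
    have h2 := congrArg (fun q : M.CohW => q.1.2) he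
    simp at h2
  · have h0 := p.2 hmax
    simp only [INStruct.Maximal, not_forall] at hmax
    obtain ⟨u, hu1, hu2⟩ := hmax
    refine ⟨⟨(u, 0), fun _ => rfl⟩, ⟨hu1, by omega⟩, ?_⟩
    intro he
    have h2 := congrArg (fun q : M.CohW => q.1.1) he
    exact hu2 h2

end Aux

/-- M^coh is a coherent intuitionistic neighbourhood model, and
M^coh,(w,n) ⊩ φ iff M,w ⊩ φ. -/
theorem coh_model_and_truth {W : Type} (M : INStruct W) (hM : M.IsModel) :
    M.coh.IsModel ∧ M.coh.Coherent ∧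
    ∀ (φ : Formula) (p : M.CohW), M.coh.sat φ p ↔ M.sat φ p.1.1 := by
  refine ⟨⟨?_, ?_, ?_⟩, ?_, ?_⟩
  · -- partial order
    exact { refl := fun p => cohLe_refl hM p,
            trans := fun p q r h1 h2 => cohLe_trans hM h1 h2,
            antisymm := fun p q h1 h2 => cohLe_antisymm hM h1 h2 }
  · -- domains upward closed
    rintro b ⟨a, ha, vm, hvd, rfl⟩ p q hpq hp
    exact cohLe_trans hM hp hpq
  · -- valuation upward closed
    intro i p q hpq hp
    exact hM.2.2 i hpq.1 hp
  · -- coherence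
    rintro b ⟨a, ha, vm, hvd, rfl⟩
    constructor
    · -- (N1)
      intro p p' hle hd v hv
      by_cases hp' : p' = vm
      · have hpvm : p = vm := cohLe_antisymm hM (hp' ▸ hle) hd
        rcases hv with ⟨_, hvset⟩ | ⟨hne, _⟩
        · exact ⟨v, Or.inl ⟨hp', hvset⟩, cohLe_refl hM v⟩
        · exact absurd hpvm hne
      · refine ⟨v, Or.inr ⟨hp', ?_⟩, cohLe_refl hM v⟩
        rcases hv with ⟨hp, hvset⟩ | ⟨_, q', hw, hq'⟩
        · exact ⟨v, ⟨vm.1.1, hM.1.refl _, hvd, hvset⟩, cohLe_refl hM v⟩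
        · exact ⟨q', hw, hq'⟩
    · -- (N2)
      intro p hd v hv v' hvv'
      rcases hv with ⟨hp, hvset⟩ | ⟨hne, q', hw, hle⟩
      · obtain ⟨q, hq, hqne⟩ := coh_succ hM vm
        refine ⟨q, hp ▸ hq, Or.inr ⟨hqne, v, ⟨vm.1.1, hM.1.refl _, hvd, hvset⟩, hvv'⟩⟩
      · exact ⟨p, cohLe_refl hM p, Or.inr ⟨hne, q', hw, cohLe_trans hM hle hvv'⟩⟩
  · -- truth lemma
    intro φ
    induction φ with
    | prop i => intro p; exact Iff.rfl
    | bot => intro p; exact Iff.rfl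
    | and φ ψ ih1 ih2 => intro p; exact and_congr (ih1 p) (ih2 p)
    | or φ ψ ih1 ih2 => intro p; exact or_congr (ih1 p) (ih2 p)
    | imp φ ψ ih1 ih2 =>
      intro p
      constructor
      · intro h v hv hφ
        obtain ⟨q, hq1, hq2⟩ := coh_lift hM p hv
        have := h q hq2 ((ih1 q).mpr (hq1 ▸ hφ))
        exact hq1 ▸ (ih2 q).mp this
      · intro h q hq hφ
        exact (ih2 q).mpr (h q.1.1 hq.1 ((ih1 q).mp hφ))
    | box φ ih =>
      intro p
      constructor
      · rintro ⟨b, ⟨a, ha, vm, hvd, rfl⟩, hd, hsat⟩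
        refine ⟨a, ha, hM.2.1 a ha hd.1 hvd, ?_⟩
        intro w' hw' v hv
        -- find p' ≥ p with p' ≠ vm
        obtain ⟨p', hp', hp'ne⟩ : ∃ p', M.cohLe p p' ∧ p' ≠ vm := by
          by_cases hpe : p = vm
          · obtain ⟨q, hq, hqne⟩ := coh_succ hM vm
            exact ⟨q, hpe ▸ hq, hqne⟩
          · exact ⟨p, cohLe_refl hM p, hpe⟩
        have hq : (⟨(v, 0), fun _ => rfl⟩ : M.CohW) ∈ (M.cohNbhd a vm).val p' :=
          Or.inr ⟨hp'ne, ⟨(v, 0), fun _ => rfl⟩,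
            ⟨w', hM.1.trans _ _ _ hd.1 hw', hM.2.1 a ha (hM.1.trans _ _ _ hd.1 hw') hvd, hv⟩,
            cohLe_refl hM _⟩
        exact (ih _).mp (hsat p' hp' _ hq)
      · rintro ⟨a, ha, hd, hsat⟩
        refine ⟨M.cohNbhd a p, ?_, cohLe_refl hM p, ?_⟩
        · exact ⟨a, ha, p, hd, rfl⟩
        rintro p' hp' q (⟨-, hqset⟩ | ⟨hne, q', ⟨u, hu1, hu2, hu3⟩, hq'⟩)
        · exact (ih q).mpr (hsat p.1.1 (hM.1.refl _) q.1.1 hqset)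
        · have h1 : M.sat φ q'.1.1 := hsat u hu1 q'.1.1 hu3
          exact (ih q).mpr (sat_persist hM φ hq'.1 h1)
    | dia φ ih =>
      intro p
      constructor
      · intro h w' hw' a ha hw'd
        obtain ⟨p', hp'1, hp'2⟩ := coh_lift hM p hw'
        have hb : M.cohNbhd a p' ∈ M.coh.N := ⟨a, ha, p', hp'1 ▸ hw'd, rfl⟩
        obtain ⟨q, hq, hqsat⟩ := h p' hp'2 _ hb (cohLe_refl hM p')
        rcases hq with ⟨_, hqset⟩ | ⟨hne, _⟩
        · exact ⟨q.1.1, hp'1 ▸ hqset, (ih q).mp hqsat⟩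
        · exact absurd rfl hne
      · rintro h p' hp' b ⟨a, ha, vm, hvd, rfl⟩ hd
        by_cases hpe : p' = vm
        · obtain ⟨v, hv, hvsat⟩ := h vm.1.1 (hpe ▸ hp').1 a ha hvd
          refine ⟨⟨(v, 0), fun _ => rfl⟩, Or.inl ⟨hpe, hv⟩, (ih _).mpr hvsat⟩
        · have hu1 : M.le p.1.1 p'.1.1 := hp'.1
          have hu2 : p'.1.1 ∈ a.dom := hM.2.1 a ha hd.1 hvd
          obtain ⟨v, hv, hvsat⟩ := h p'.1.1 hu1 a ha hu2
          refine ⟨⟨(v, 0), fun _ => rfl⟩,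
            Or.inr ⟨hpe, ⟨(v, 0), fun _ => rfl⟩, ⟨p'.1.1, hd.1, hu2, hv⟩, cohLe_refl hM _⟩,
            (ih _).mpr hvsat⟩

end IMPaper
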